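/- Let 0 ≤ δ ≤ 1, s ∈ ℝ, and t ≠ 0. Define the multiplication operator M(t)f(x) = e^{i|x|²/(2t)} f(x) and the operator R(t) = F (M(t) - 1) F^{-1}, where F is the Fourier transform. Then there is a constant C independent of t such that ‖R(t) f‖_{H^s(ℝ)} ≤ C |t|^{-δ} ‖f‖_{H^{s+2δ}(ℝ)} for all f in H^{s+2δ}(ℝ). -/

import Mathlib

open MeasureTheory Real Complex ENNReal

/-- The Fourier transform `𝓕f(ξ) = (2π)^{-1/2} ∫ e^{-ixξ} f(x) dx` (paper's convention). -/
noncomputable def Fpaper (f : ℝ → ℂ) (ξ : ℝ) : ℂ :=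
  ((Real.sqrt (2 * Real.pi))⁻¹ : ℂ) * ∫ x : ℝ, Complex.exp (-(Complex.I * x * ξ)) * f x

/-- The inverse Fourier transform `(2π)^{-1/2} ∫ e^{ixξ} f(ξ) dξ`. -/
noncomputable def FpaperInv (f : ℝ → ℂ) (x : ℝ) : ℂ :=
  ((Real.sqrt (2 * Real.pi))⁻¹ : ℂ) * ∫ ξ : ℝ, Complex.exp (Complex.I * x * ξ) * f ξ

/-- The remainder operator `R(t) = 𝓕 (M(t) - 1) 𝓕⁻¹`, where `M(t)` is
multiplication by `e^{i|x|²/(2t)}`. -/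
noncomputable def Rop (t : ℝ) (f : ℝ → ℂ) : ℝ → ℂ :=
  Fpaper (fun x : ℝ => (Complex.exp (Complex.I * (x : ℂ) ^ 2 / (2 * (t : ℂ))) - 1) * FpaperInv f x)

/-- The Sobolev `H^s` norm `‖⟨ξ⟩^s 𝓕f‖_{L²}` (valued in `ℝ≥0∞`). -/
noncomputable def hsNorm (s : ℝ) (f : ℝ → ℂ) : ℝ≥0∞ :=
  eLpNorm (fun ξ : ℝ => (((1 + ξ ^ 2) ^ (s / 2) : ℝ) : ℂ) * Fpaper f ξ) 2 volume

open FourierTransform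

lemma integrable_unit_mul {h : ℝ → ℂ} (hh : Integrable h) (a : ℝ → ℂ)
    (hc : Continuous a) (ha : ∀ x, ‖a x‖ = 1) : Integrable (fun x => a x * h x) :=
  hh.bdd_mul hc.aestronglyMeasurable (Filter.Eventually.of_forall fun x => (ha x).le)

lemma norm_exp_I_mul (x ξ : ℝ) : ‖Complex.exp (Complex.I * x * ξ)‖ = 1 := by
  have h : Complex.I * (x : ℂ) * (ξ : ℂ) = ((x * ξ : ℝ) : ℂ) * Complex.I := by
    push_cast; ring
  rw [h, Complex.norm_exp_ofReal_mul_I]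

lemma norm_exp_neg_I_mul (x ξ : ℝ) : ‖Complex.exp (-(Complex.I * x * ξ))‖ = 1 := by
  have h : -(Complex.I * (x : ℂ) * (ξ : ℂ)) = ((-(x * ξ) : ℝ) : ℂ) * Complex.I := by
    push_cast; ring
  rw [h, Complex.norm_exp_ofReal_mul_I]

lemma integrable_exp_mul_iff (h : ℝ → ℂ) (ξ : ℝ) :
    Integrable (fun x : ℝ => Complex.exp (-(Complex.I * x * ξ)) * h x) ↔ Integrable h := by
  constructor
  · intro hi
    have hrw : h = fun x : ℝ =>
        Complex.exp (Complex.I * x * ξ) * (Complex.exp (-(Complex.I * x * ξ)) * h x) := by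
      funext x
      rw [← mul_assoc, ← Complex.exp_add]
      simp
    rw [hrw]
    exact integrable_unit_mul hi _ (by fun_prop) (fun x => norm_exp_I_mul x ξ)
  · intro hi
    exact integrable_unit_mul hi _ (by fun_prop) (fun x => norm_exp_neg_I_mul x ξ)

lemma Fpaper_eq (f : ℝ → ℂ) (ξ : ℝ) :
    Fpaper f ξ = ((Real.sqrt (2 * Real.pi))⁻¹ : ℂ) * 𝓕 f (ξ / (2 * Real.pi)) := by
  rw [Fpaper, Real.fourier_real_eq_integral_exp_smul]
  congr 1
  refine integral_congr_ae (Filter.Eventually.of_forall fun x => ?_)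
  have h1 : -2 * Real.pi * x * (ξ / (2 * Real.pi)) = -(x * ξ) := by
    field_simp
  simp only [smul_eq_mul, h1]
  congr 1
  push_cast
  ring

lemma FpaperInv_eq (f : ℝ → ℂ) (x : ℝ) : FpaperInv f x = Fpaper f (-x) := by
  rw [FpaperInv, Fpaper]
  congr 1
  refine integral_congr_ae (Filter.Eventually.of_forall fun ξ => ?_)
  have h : -(Complex.I * (ξ : ℂ) * ((-x : ℝ) : ℂ)) = Complex.I * (x : ℂ) * (ξ : ℂ) := by
    push_cast
    ring
  simp only [h]

lemma Fpaper_zero : Fpaper (fun _ => (0 : ℂ)) = fun _ => 0 := by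
  funext ξ; simp [Fpaper]

lemma Fpaper_of_not_integrable {f : ℝ → ℂ} (hf : ¬ Integrable f) :
    Fpaper f = fun _ => 0 := by
  funext ξ
  rw [Fpaper, integral_undef, mul_zero]
  exact fun h => hf ((integrable_exp_mul_iff f ξ).1 h)

lemma Fpaper_continuous {f : ℝ → ℂ} (hf : Integrable f) : Continuous (Fpaper f) := by
  have h𝓕 : Continuous (𝓕 f) :=
    VectorFourier.fourierIntegral_continuous Real.continuous_fourierChar
      (by exact continuous_inner) hf
  have : Fpaper f = fun ξ => ((Real.sqrt (2 * Real.pi))⁻¹ : ℂ) * 𝓕 f (ξ / (2 * Real.pi)) :=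
    funext (Fpaper_eq f)
  rw [this]
  fun_prop

lemma Fpaper_Fpaper {g : ℝ → ℂ} (hg : Integrable g) (hG : Integrable (𝓕 g))
    (hc : Continuous g) (ξ : ℝ) : Fpaper (Fpaper g) ξ = g (-ξ) := by
  have h2π : (0 : ℝ) < 2 * Real.pi := by positivity
  have hsne : Real.sqrt (2 * Real.pi) ≠ 0 := by positivity
  set c : ℂ := ((Real.sqrt (2 * Real.pi))⁻¹ : ℂ) with hc_def
  have hF : Fpaper g = fun η => c * 𝓕 g (η / (2 * Real.pi)) := funext (Fpaper_eq g)
  set K : ℝ → ℂ := fun u => Complex.exp (((-2 * Real.pi * u * ξ : ℝ) : ℂ) * Complex.I) * 𝓕 g u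
    with hK_def
  have step1 : Fpaper (Fpaper g) ξ = c * ∫ η : ℝ, c * K (η / (2 * Real.pi)) := by
    rw [Fpaper, hF]
    congr 1
    refine integral_congr_ae (Filter.Eventually.of_forall fun η => ?_)
    have h1 : -2 * Real.pi * (η / (2 * Real.pi)) * ξ = -(η * ξ) := by
      field_simp
    simp only [hK_def, h1]
    have h2 : ((-(η * ξ) : ℝ) : ℂ) * Complex.I = -(Complex.I * (η : ℂ) * (ξ : ℂ)) := by
      push_cast; ring
    rw [h2]
    ring
  have step2 : (∫ η : ℝ, c * K (η / (2 * Real.pi))) = c * ((2 * Real.pi) • ∫ u : ℝ, K u) := by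
    rw [integral_const_mul]
    congr 1
    rw [MeasureTheory.Measure.integral_comp_div K (2 * Real.pi), abs_of_pos h2π]
  have step3 : (∫ u : ℝ, K u) = 𝓕 (𝓕 g) ξ := by
    rw [Real.fourier_real_eq_integral_exp_smul]
    refine integral_congr_ae (Filter.Eventually.of_forall fun u => ?_)
    simp only [hK_def, smul_eq_mul]
  have step4 : 𝓕 (𝓕 g) ξ = g (-ξ) := by
    have h : 𝓕 (𝓕 g) ξ = 𝓕⁻ (𝓕 g) (-ξ) := by
      rw [Real.fourierInv_eq_fourier_neg, neg_neg]
    rw [h, hg.fourierInv_fourier_eq hG hc.continuousAt]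
  have hms : ((Real.sqrt (2 * Real.pi) : ℝ) : ℂ) * ((Real.sqrt (2 * Real.pi) : ℝ) : ℂ)
      = ((2 * Real.pi : ℝ) : ℂ) := by
    norm_cast
    exact Real.mul_self_sqrt h2π.le
  rw [step1, step2, step3, step4, Complex.real_smul]
  have hone : c * c * ((2 * Real.pi : ℝ) : ℂ) = 1 := by
    rw [hc_def, ← mul_inv, hms]
    exact inv_mul_cancel₀ (by exact_mod_cast h2π.ne')
  calc c * (c * (((2 * Real.pi : ℝ) : ℂ) * g (-ξ)))
      = (c * c * ((2 * Real.pi : ℝ) : ℂ)) * g (-ξ) := by ring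
    _ = g (-ξ) := by rw [hone, one_mul]

/-- Key pointwise bound on the symbol. -/
lemma exp_quad_bound {δ : ℝ} (hδ0 : 0 ≤ δ) (hδ1 : δ ≤ 1) {t : ℝ} (ht : t ≠ 0) (ξ : ℝ) :
    ‖Complex.exp (Complex.I * (ξ : ℂ) ^ 2 / (2 * (t : ℂ))) - 1‖
      ≤ 2 * |t| ^ (-δ) * (1 + ξ ^ 2) ^ δ := by
  have ht2 : (2 * (t : ℂ)) ≠ 0 := by
    simp [ht]
  set θ : ℝ := ξ ^ 2 / (2 * t) with hθ_def
  have harg : Complex.I * (ξ : ℂ) ^ 2 / (2 * (t : ℂ)) = ((θ : ℝ) : ℂ) * Complex.I := by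
    rw [hθ_def]
    push_cast
    field_simp
  rw [harg]
  set z : ℂ := Complex.exp (((θ : ℝ) : ℂ) * Complex.I) - 1 with hz_def
  have hb2 : ‖z‖ ≤ 2 := by
    calc ‖z‖ ≤ ‖Complex.exp (((θ : ℝ) : ℂ) * Complex.I)‖ + ‖(1 : ℂ)‖ := norm_sub_le _ _
      _ = 2 := by rw [Complex.norm_exp_ofReal_mul_I]; norm_num
  have hbθ : ‖z‖ ≤ |θ| := by
    have hzeq : z = Complex.ofReal (Real.cos θ - 1) + Complex.ofReal (Real.sin θ) * Complex.I := by
      rw [hz_def, Complex.exp_mul_I, ← Complex.ofReal_cos, ← Complex.ofReal_sin]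
      push_cast
      ring
    have hsq : ‖z‖ ^ 2 = 2 - 2 * Real.cos θ := by
      rw [hzeq, Complex.sq_norm, Complex.normSq_apply]
      simp only [Complex.add_re, Complex.ofReal_re, Complex.mul_re, Complex.I_re,
        Complex.ofReal_im, Complex.I_im, Complex.add_im, Complex.mul_im]
      nlinarith [Real.sin_sq_add_cos_sq θ]
    have hcos : 1 - θ ^ 2 / 2 ≤ Real.cos θ := Real.one_sub_sq_div_two_le_cos
    have h1 : ‖z‖ ^ 2 ≤ |θ| ^ 2 := by
      rw [hsq, _root_.sq_abs]
      nlinarith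
    nlinarith [norm_nonneg z, abs_nonneg θ]
  have habs : |θ| = ξ ^ 2 / (2 * |t|) := by
    rw [hθ_def, abs_div, _root_.abs_of_nonneg (sq_nonneg ξ), abs_mul]
    norm_num
  set a : ℝ := ξ ^ 2 / (2 * |t|) with ha_def
  have ha0 : 0 ≤ a := by positivity
  have hmin : ‖z‖ ≤ 2 ^ (1 - δ) * a ^ δ := by
    rcases le_total a 2 with hle | hge
    · rcases eq_or_lt_of_le ha0 with h0 | h0
      · have hz0 : ‖z‖ ≤ 0 := by
          rw [habs, ← h0] at hbθ; exact hbθ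
        exact hz0.trans (by positivity)
      · have hsplit : a = a ^ (1 - δ) * a ^ δ := by
          rw [← Real.rpow_add h0]; simp
        calc ‖z‖ ≤ a := by rw [← habs]; exact hbθ
          _ = a ^ (1 - δ) * a ^ δ := hsplit
          _ ≤ 2 ^ (1 - δ) * a ^ δ := by
              apply mul_le_mul_of_nonneg_right _ (Real.rpow_nonneg ha0 δ)
              exact Real.rpow_le_rpow ha0 hle (by linarith)
    · calc ‖z‖ ≤ 2 := hb2
        _ = 2 ^ (1 - δ) * 2 ^ δ := by
            rw [← Real.rpow_add (by norm_num : (0:ℝ) < 2)]; simp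
        _ ≤ 2 ^ (1 - δ) * a ^ δ := by
            apply mul_le_mul_of_nonneg_left _ (Real.rpow_nonneg (by norm_num) _)
            exact Real.rpow_le_rpow (by norm_num) hge hδ0
  have h2d : (2 : ℝ) ^ (1 - δ) ≤ 2 := by
    calc (2 : ℝ) ^ (1 - δ) ≤ 2 ^ (1 : ℝ) :=
          Real.rpow_le_rpow_of_exponent_le one_le_two (by linarith)
      _ = 2 := Real.rpow_one 2
  have htpos : (0 : ℝ) < |t| := abs_pos.2 ht
  have had : a ^ δ ≤ (1 + ξ ^ 2) ^ δ * |t| ^ (-δ) := by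
    have h1 : a = ξ ^ 2 * (2 * |t|)⁻¹ := by rw [ha_def, div_eq_mul_inv]
    rw [h1, Real.mul_rpow (sq_nonneg ξ) (by positivity)]
    have hA : (ξ ^ 2 : ℝ) ^ δ ≤ (1 + ξ ^ 2) ^ δ :=
      Real.rpow_le_rpow (sq_nonneg ξ) (by nlinarith [sq_nonneg ξ]) hδ0
    have hB : ((2 * |t|)⁻¹ : ℝ) ^ δ ≤ |t| ^ (-δ) := by
      rw [Real.inv_rpow (by positivity), Real.rpow_neg htpos.le]
      apply inv_anti₀ (Real.rpow_pos_of_pos htpos δ)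
      exact Real.rpow_le_rpow htpos.le (by linarith) hδ0
    exact mul_le_mul hA hB (by positivity) (by positivity)
  calc ‖z‖ ≤ 2 ^ (1 - δ) * a ^ δ := hmin
    _ ≤ 2 * ((1 + ξ ^ 2) ^ δ * |t| ^ (-δ)) :=
        mul_le_mul h2d had (Real.rpow_nonneg ha0 δ) (by norm_num)
    _ = 2 * |t| ^ (-δ) * (1 + ξ ^ 2) ^ δ := by ring

/-- For `0 ≤ δ ≤ 1`, `s ∈ ℝ` and `t ≠ 0`:
`‖R(t)f‖_{H^s} ≤ C |t|^{-δ} ‖f‖_{H^{s+2δ}}` with `C` independent of `t`. -/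
theorem Rop_Hs_bound (δ s : ℝ) (hδ0 : 0 ≤ δ) (hδ1 : δ ≤ 1) :
    ∃ C > 0, ∀ t : ℝ, t ≠ 0 → ∀ f : ℝ → ℂ, hsNorm (s + 2 * δ) f < ⊤ →
      hsNorm s (Rop t f) ≤ ENNReal.ofReal (C * |t| ^ (-δ)) * hsNorm (s + 2 * δ) f := by
  refine ⟨2, by norm_num, fun t ht f _ => ?_⟩
  set g : ℝ → ℂ :=
    fun x => (Complex.exp (Complex.I * (x : ℂ) ^ 2 / (2 * (t : ℂ))) - 1) * Fpaper f (-x)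
    with hg_def
  have hRop : Rop t f = Fpaper g := by
    rw [Rop]
    have hAg : (fun x : ℝ =>
        (Complex.exp (Complex.I * (x : ℂ) ^ 2 / (2 * (t : ℂ))) - 1) * FpaperInv f x) = g := by
      funext x
      simp only [hg_def]
      rw [FpaperInv_eq]
    rw [hAg]
  rw [hsNorm, hRop]
  by_cases hf : Integrable f
  swap
  · have hF0 : Fpaper f = fun _ => 0 := Fpaper_of_not_integrable hf
    have hg0 : g = fun _ => (0 : ℂ) := by
      funext x; rw [hg_def]; simp [hF0]
    rw [hg0, Fpaper_zero, Fpaper_zero]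
    simp only [mul_zero]
    rw [eLpNorm_zero']
    exact zero_le
  by_cases hg : Integrable g
  swap
  · have h0 : Fpaper g = fun _ => 0 := Fpaper_of_not_integrable hg
    rw [h0, Fpaper_zero]
    simp only [mul_zero]
    rw [eLpNorm_zero']
    exact zero_le
  by_cases hG : Integrable (𝓕 g)
  swap
  · have hFg : ¬ Integrable (Fpaper g) := by
      intro h
      apply hG
      have hEq : Fpaper g =
          fun η => ((Real.sqrt (2 * Real.pi))⁻¹ : ℂ) * 𝓕 g (η / (2 * Real.pi)) :=
        funext (Fpaper_eq g)
      rw [hEq] at h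
      have hu : IsUnit ((Real.sqrt (2 * Real.pi))⁻¹ : ℂ) := by
        apply IsUnit.mk0
        simp only [ne_eq, inv_eq_zero]
        exact_mod_cast Real.sqrt_ne_zero'.2 (by positivity)
      have h2 : Integrable (fun η => 𝓕 g (η / (2 * Real.pi))) :=
        (integrable_const_mul_iff hu _).1 h
      have h2π : ((2 * Real.pi)⁻¹ : ℝ) ≠ 0 := by positivity
      have := (integrable_comp_mul_right_iff (𝓕 g) h2π).1 (by
        simpa [div_eq_mul_inv] using h2)
      exact this
    have h0 : Fpaper (Fpaper g) = fun _ => 0 := Fpaper_of_not_integrable hFg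
    rw [h0]
    simp only [mul_zero]
    rw [eLpNorm_zero']
    exact zero_le
  -- main case
  have hgcont : Continuous g := by
    rw [hg_def]
    have hFc : Continuous (Fpaper f) := Fpaper_continuous hf
    fun_prop
  have hinv : ∀ ξ, Fpaper (Fpaper g) ξ = g (-ξ) := Fpaper_Fpaper hg hG hgcont
  have hgneg : ∀ ξ : ℝ, g (-ξ)
      = (Complex.exp (Complex.I * (ξ : ℂ) ^ 2 / (2 * (t : ℂ))) - 1) * Fpaper f ξ := by
    intro ξ
    rw [hg_def]
    simp only [neg_neg]
    congr 3
    push_cast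
    ring
  have hfun : (fun ξ : ℝ => (((1 + ξ ^ 2) ^ (s / 2) : ℝ) : ℂ) * Fpaper (Fpaper g) ξ)
      = fun ξ : ℝ => (((1 + ξ ^ 2) ^ (s / 2) : ℝ) : ℂ) *
          ((Complex.exp (Complex.I * (ξ : ℂ) ^ 2 / (2 * (t : ℂ))) - 1) * Fpaper f ξ) := by
    funext ξ
    rw [hinv ξ, hgneg ξ]
  rw [hfun]
  set cst : ℂ := ((2 * |t| ^ (-δ) : ℝ) : ℂ) with hcst_def
  have hpt : ∀ ξ : ℝ, ‖(((1 + ξ ^ 2) ^ (s / 2) : ℝ) : ℂ) *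
      ((Complex.exp (Complex.I * (ξ : ℂ) ^ 2 / (2 * (t : ℂ))) - 1) * Fpaper f ξ)‖
      ≤ ‖(cst • fun ξ : ℝ => (((1 + ξ ^ 2) ^ ((s + 2 * δ) / 2) : ℝ) : ℂ) * Fpaper f ξ) ξ‖ := by
    intro ξ
    have hbase : (0 : ℝ) < 1 + ξ ^ 2 := by positivity
    simp only [Pi.smul_apply, smul_eq_mul, hcst_def]
    rw [norm_mul, norm_mul, norm_mul, norm_mul]
    rw [Complex.norm_real, Complex.norm_real, Complex.norm_real]
    rw [Real.norm_eq_abs, Real.norm_eq_abs, Real.norm_eq_abs]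
    rw [_root_.abs_of_nonneg (Real.rpow_nonneg hbase.le _),
      _root_.abs_of_nonneg (Real.rpow_nonneg hbase.le _),
      _root_.abs_of_nonneg (by positivity : (0:ℝ) ≤ 2 * |t| ^ (-δ))]
    have hkey := exp_quad_bound hδ0 hδ1 ht ξ
    have hsplit : (1 + ξ ^ 2) ^ ((s + 2 * δ) / 2) = (1 + ξ ^ 2) ^ (s / 2) * (1 + ξ ^ 2) ^ δ := by
      rw [← Real.rpow_add hbase]
      congr 1
      ring
    rw [hsplit]
    have hP : (0 : ℝ) ≤ (1 + ξ ^ 2) ^ (s / 2) := Real.rpow_nonneg hbase.le _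
    have hN : (0 : ℝ) ≤ ‖Fpaper f ξ‖ := norm_nonneg _
    calc (1 + ξ ^ 2) ^ (s / 2) *
          (‖Complex.exp (Complex.I * (ξ : ℂ) ^ 2 / (2 * (t : ℂ))) - 1‖ * ‖Fpaper f ξ‖)
        ≤ (1 + ξ ^ 2) ^ (s / 2) * ((2 * |t| ^ (-δ) * (1 + ξ ^ 2) ^ δ) * ‖Fpaper f ξ‖) := by
          apply mul_le_mul_of_nonneg_left _ hP
          exact mul_le_mul_of_nonneg_right hkey hN
      _ = 2 * |t| ^ (-δ) * ((1 + ξ ^ 2) ^ (s / 2) * (1 + ξ ^ 2) ^ δ * ‖Fpaper f ξ‖) := by ring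
  calc eLpNorm (fun ξ : ℝ => (((1 + ξ ^ 2) ^ (s / 2) : ℝ) : ℂ) *
        ((Complex.exp (Complex.I * (ξ : ℂ) ^ 2 / (2 * (t : ℂ))) - 1) * Fpaper f ξ)) 2 volume
      ≤ eLpNorm (cst • fun ξ : ℝ =>
          (((1 + ξ ^ 2) ^ ((s + 2 * δ) / 2) : ℝ) : ℂ) * Fpaper f ξ) 2 volume :=
        eLpNorm_mono hpt
    _ = ‖cst‖₊ • eLpNorm (fun ξ : ℝ =>
          (((1 + ξ ^ 2) ^ ((s + 2 * δ) / 2) : ℝ) : ℂ) * Fpaper f ξ) 2 volume :=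
        eLpNorm_const_smul cst _ 2 volume
    _ = ENNReal.ofReal (2 * |t| ^ (-δ)) * hsNorm (s + 2 * δ) f := by
        rw [hsNorm, ENNReal.smul_def, smul_eq_mul]
        congr 1
        rw [← enorm_eq_nnnorm, ← ofReal_norm, hcst_def, Complex.norm_real, Real.norm_eq_abs,
          _root_.abs_of_nonneg (by positivity : (0:ℝ) ≤ 2 * |t| ^ (-δ))]
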